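/- Let $\phi_0, \psi_0 : \mathbb{R} \to [0,1]$ be continuous with compact support, $\phi_0$ supported in $[0,1]$, $\psi_0$ supported in $[-1,1]$. Let $\eta_1 : (0,\infty) \to [0,1]$ and $\tau, v : (0,\infty) \to (0,\infty)$ be continuous, $v$ differentiable at $\omega_0$, and $\mu_0 \in (0,1)$, $\omega_0 > 0$. Define $F_\epsilon(\tilde t, \tilde\mu, \tilde\omega) = \eta_1(\omega_0 + \epsilon\tilde\omega)\, e^{-\frac{2}{\tau(\omega_0+\epsilon\tilde\omega)\,(\mu_0+\epsilon\tilde\mu)\, v(\omega_0+\epsilon\tilde\omega)}}\, \psi_0\!\left(\tilde t + \frac{1}{\epsilon}\left(\frac{2}{\mu_0 v(\omega_0)} - \frac{2}{(\mu_0+\epsilon\tilde\mu) v(\omega_0+\epsilon\tilde\omega)}\right)\right) \phi_0(\tilde t)\phi_0(\tilde\mu)\phi_0(\tilde\omega)$ on $[0,1]^3$. Then $\lim_{\epsilon\to 0^+} \int_{[0,1]^3} F_\epsilon = \eta_1(\omega_0)\, e^{-\frac{2}{\tau(\omega_0)\mu_0 v(\omega_0)}} \int_{[0,1]^3} \psi_0\!\left(\tilde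 t + \tfrac{2}{(\mu_0 v(\omega_0))^2}(v(\omega_0)\tilde\mu + \mu_0 v'(\omega_0)\tilde\omega)\right) \phi_0(\tilde t)\phi_0(\tilde\mu)\phi_0(\tilde\omega)\, d\tilde t\, d\tilde\mu\, d\tilde\omega$. -/

import Mathlib

/-!
For fixed `(t, μ, ω)` the amplitude factor is continuous at `ε = 0`, and the argument of `ψ₀`
is `t` plus the difference quotient at `ε = 0` of `-2 / ((μ₀ + ε μ) v (ω₀ + ε ω))`, which tends
to `2 (v ω₀ μ + μ₀ v' ω) / (μ₀ v ω₀)²`. Hence the integrands converge pointwise; for `ε > 0`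
they are continuous on the cube and take values in `[0, 1]`, so bounded convergence applies to
the integral over the cube, which Fubini identifies with the iterated integral.
-/

open MeasureTheory Filter Topology Set

section Fubini

variable {α β γ E : Type*} [MeasurableSpace α] [MeasurableSpace β] [MeasurableSpace γ]
  [NormedAddCommGroup E] [NormedSpace ℝ E]
  {μ : Measure α} {ν : Measure β} {ρ : Measure γ} [SFinite μ] [SFinite ν] [SFinite ρ]

theorem setIntegral_prod_prod (f : α × β × γ → E) {s : Set α} {t : Set β} {u : Set γ}
    (hf : IntegrableOn f (s ×ˢ t ×ˢ u) (μ.prod (ν.prod ρ))) :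
    ∫ q in s ×ˢ t ×ˢ u, f q ∂μ.prod (ν.prod ρ) =
      ∫ x in s, ∫ y in t, ∫ z in u, f (x, y, z) ∂ρ ∂ν ∂μ := by
  rw [setIntegral_prod f hf]
  have hf' : Integrable f ((μ.restrict s).prod ((ν.prod ρ).restrict (t ×ˢ u))) := by
    rwa [Measure.prod_restrict]
  refine integral_congr_ae (hf'.prod_right_ae.mono fun x hx => ?_)
  exact setIntegral_prod _ hx

end Fubini

theorem tendsto_setIntegral_of_continuousOn_of_norm_le_const {X E ι : Type*}
    [TopologicalSpace X] [T2Space X] [MeasurableSpace X] [OpensMeasurableSpace X]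
    [NormedAddCommGroup E] [NormedSpace ℝ E] [SecondCountableTopologyEither X E]
    {μ : Measure X} [IsFiniteMeasureOnCompacts μ] {l : Filter ι} [l.IsCountablyGenerated]
    {F : ι → X → E} {f : X → E} {K : Set X} (hK : IsCompact K) (C : ℝ)
    (hcont : ∀ᶠ i in l, ContinuousOn (F i) K) (hbound : ∀ᶠ i in l, ∀ x ∈ K, ‖F i x‖ ≤ C)
    (hlim : ∀ x ∈ K, Tendsto (F · x) l (𝓝 (f x))) :
    Tendsto (fun i => ∫ x in K, F i x ∂μ) l (𝓝 (∫ x in K, f x ∂μ)) := by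
  have : IsFiniteMeasure (μ.restrict K) := isFiniteMeasure_restrict.2 hK.measure_ne_top
  refine tendsto_integral_filter_of_norm_le_const
    (hcont.mono fun i hi => hi.aestronglyMeasurable hK.measurableSet)
    ⟨C, hbound.mono fun i hi => (ae_restrict_mem hK.measurableSet).mono hi⟩
    ((ae_restrict_mem hK.measurableSet).mono hlim)

theorem HasDerivAt.tendsto_inv_mul_const_div_sub {g : ℝ → ℝ} {g' x : ℝ} (hg : HasDerivAt g g' x)
    (hx : g x ≠ 0) (c : ℝ) :
    Tendsto (fun t => t⁻¹ * (c / g x - c / g (x + t))) (𝓝[≠] 0) (𝓝 (c * g' / g x ^ 2)) := by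
  convert ((hg.inv hx).const_mul c).tendsto_slope_zero.neg using 2 with t
  · simp only [smul_eq_mul, Pi.inv_apply, div_eq_mul_inv]
    ring
  · ring

section Rescaled

variable (φ₀ ψ₀ η₁ τ v : ℝ → ℝ) (μ₀ ω₀ : ℝ)

noncomputable def rescaledAmplitude (ε μ ω : ℝ) : ℝ :=
  η₁ (ω₀ + ε * ω) * Real.exp (-(2 / (τ (ω₀ + ε * ω) * (μ₀ + ε * μ) * v (ω₀ + ε * ω))))

noncomputable def rescaledShift (ε μ ω : ℝ) : ℝ :=
  (1 / ε) * (2 / (μ₀ * v ω₀) - 2 / ((μ₀ + ε * μ) * v (ω₀ + ε * ω)))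

/-- `rescaledIntegrand φ₀ ψ₀ η₁ τ v μ₀ ω₀ ε (t, μ, ω)` is the paper's `F_ε(t̃, μ̃, ω̃)`. -/
noncomputable def rescaledIntegrand (ε : ℝ) (q : ℝ × ℝ × ℝ) : ℝ :=
  rescaledAmplitude η₁ τ v μ₀ ω₀ ε q.2.1 q.2.2 * ψ₀ (q.1 + rescaledShift v μ₀ ω₀ ε q.2.1 q.2.2)
    * φ₀ q.1 * φ₀ q.2.1 * φ₀ q.2.2

variable {φ₀ ψ₀ η₁ τ v μ₀ ω₀}

theorem tendsto_rescaledAmplitude (hη₁ : ContinuousAt η₁ ω₀) (hτ : ContinuousAt τ ω₀)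
    (hv : ContinuousAt v ω₀) (h₀ : τ ω₀ * μ₀ * v ω₀ ≠ 0) (μ ω : ℝ) :
    Tendsto (fun ε => rescaledAmplitude η₁ τ v μ₀ ω₀ ε μ ω) (𝓝 0)
      (𝓝 (η₁ ω₀ * Real.exp (-(2 / (τ ω₀ * μ₀ * v ω₀))))) := by
  have hω : Tendsto (fun ε : ℝ => ω₀ + ε * ω) (𝓝 0) (𝓝 ω₀) := by
    simpa using tendsto_const_nhds.add ((tendsto_id (x := 𝓝 (0:ℝ))).mul_const ω)
  have hμ : Tendsto (fun ε : ℝ => μ₀ + ε * μ) (𝓝 0) (𝓝 μ₀) := by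
    simpa using tendsto_const_nhds.add ((tendsto_id (x := 𝓝 (0:ℝ))).mul_const μ)
  exact (hη₁.tendsto.comp hω).mul <| Real.continuous_exp.continuousAt.tendsto.comp <|
    (tendsto_const_nhds.div (((hτ.tendsto.comp hω).mul hμ).mul (hv.tendsto.comp hω)) h₀).neg

theorem tendsto_rescaledShift {v' : ℝ} (hv : HasDerivAt v v' ω₀) (h₀ : μ₀ * v ω₀ ≠ 0) (μ ω : ℝ) :
    Tendsto (fun ε => rescaledShift v μ₀ ω₀ ε μ ω) (𝓝[≠] 0)
      (𝓝 (2 / (μ₀ * v ω₀) ^ 2 * (v ω₀ * μ + μ₀ * v' * ω))) := by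
  have hω : HasDerivAt (fun ε : ℝ => ω₀ + ε * ω) ω 0 := by
    simpa using ((hasDerivAt_id (0:ℝ)).mul_const ω).const_add ω₀
  have hμ : HasDerivAt (fun ε : ℝ => μ₀ + ε * μ) μ 0 := by
    simpa using ((hasDerivAt_id (0:ℝ)).mul_const μ).const_add μ₀
  have hv' : HasDerivAt v v' (ω₀ + 0 * ω) := by simpa using hv
  have hden := hμ.fun_mul (hv'.comp 0 hω)
  have := hden.tendsto_inv_mul_const_div_sub (by simpa using h₀) 2
  simp only [zero_add, zero_mul, add_zero, Function.comp_apply] at this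
  convert this using 2 with ε
  · simp [rescaledShift]
  · ring

theorem tendsto_rescaledIntegrand (hψ₀ : Continuous ψ₀) (hη₁ : ContinuousAt η₁ ω₀)
    (hτ : ContinuousAt τ ω₀) {v' : ℝ} (hv : HasDerivAt v v' ω₀) (hτ₀ : τ ω₀ ≠ 0)
    (h₀ : μ₀ * v ω₀ ≠ 0) (q : ℝ × ℝ × ℝ) :
    Tendsto (fun ε => rescaledIntegrand φ₀ ψ₀ η₁ τ v μ₀ ω₀ ε q) (𝓝[≠] 0)
      (𝓝 (η₁ ω₀ * Real.exp (-(2 / (τ ω₀ * μ₀ * v ω₀))) *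
        (ψ₀ (q.1 + 2 / (μ₀ * v ω₀) ^ 2 * (v ω₀ * q.2.1 + μ₀ * v' * q.2.2))
          * φ₀ q.1 * φ₀ q.2.1 * φ₀ q.2.2))) := by
  have hA := tendsto_rescaledAmplitude hη₁ hτ hv.continuousAt
    (by rw [mul_assoc]; exact mul_ne_zero hτ₀ h₀) q.2.1 q.2.2
  have hS := (hψ₀.tendsto _).comp
    ((tendsto_const_nhds (x := q.1)).add (tendsto_rescaledShift hv h₀ q.2.1 q.2.2))
  simp only [← mul_assoc]
  exact (((hA.mono_left nhdsWithin_le_nhds).mul hS).mul_const _).mul_const _ |>.mul_const _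

theorem rescaledIntegrand_mem_Icc (hφ₀ : ∀ x, φ₀ x ∈ Icc (0:ℝ) 1)
    (hψ₀ : ∀ x, ψ₀ x ∈ Icc (0:ℝ) 1) (hη₁ : ∀ ω > 0, η₁ ω ∈ Icc (0:ℝ) 1)
    (hτ : ∀ ω > 0, 0 < τ ω) (hv : ∀ ω > 0, 0 < v ω) (hμ₀ : 0 < μ₀) (hω₀ : 0 < ω₀)
    {ε : ℝ} (hε : 0 ≤ ε) {q : ℝ × ℝ × ℝ} (hμ : 0 ≤ q.2.1) (hω : 0 ≤ q.2.2) :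
    rescaledIntegrand φ₀ ψ₀ η₁ τ v μ₀ ω₀ ε q ∈ Icc (0:ℝ) 1 := by
  have hω' : 0 < ω₀ + ε * q.2.2 := by positivity
  have hμ' : 0 < μ₀ + ε * q.2.1 := by positivity
  have hτ' := hτ _ hω'
  have hv' := hv _ hω'
  have hexp : Real.exp (-(2 / (τ (ω₀ + ε * q.2.2) * (μ₀ + ε * q.2.1) * v (ω₀ + ε * q.2.2))))
      ∈ Icc (0:ℝ) 1 :=
    ⟨(Real.exp_pos _).le, Real.exp_le_one_iff.2 (neg_nonpos.2 (by positivity))⟩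
  exact unitInterval.mul_mem (unitInterval.mul_mem (unitInterval.mul_mem (unitInterval.mul_mem
    (unitInterval.mul_mem (hη₁ _ hω') hexp) (hψ₀ _)) (hφ₀ _)) (hφ₀ _)) (hφ₀ _)

theorem continuousOn_rescaledIntegrand (hφ₀ : Continuous φ₀) (hψ₀ : Continuous ψ₀)
    (hη₁ : ContinuousOn η₁ (Ioi 0)) (hτc : ContinuousOn τ (Ioi 0)) (hτ : ∀ ω > 0, 0 < τ ω)
    (hvc : ContinuousOn v (Ioi 0)) (hv : ∀ ω > 0, 0 < v ω) (hμ₀ : 0 < μ₀) (hω₀ : 0 < ω₀)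
    {ε : ℝ} (hε : 0 ≤ ε) :
    ContinuousOn (rescaledIntegrand φ₀ ψ₀ η₁ τ v μ₀ ω₀ ε) (univ ×ˢ Ici 0 ×ˢ Ici 0) := by
  rintro ⟨t, μ, ω⟩ ⟨-, hμ, hω⟩
  have hω' : 0 < ω₀ + ε * ω := by simp only [mem_Ici] at hω; positivity
  have hμ' : 0 < μ₀ + ε * μ := by simp only [mem_Ici] at hμ; positivity
  have hη₁' := hη₁.continuousAt (Ioi_mem_nhds hω')
  have hτ' := hτc.continuousAt (Ioi_mem_nhds hω')
  have hv' := hvc.continuousAt (Ioi_mem_nhds hω')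
  have h₁ : τ (ω₀ + ε * ω) * (μ₀ + ε * μ) * v (ω₀ + ε * ω) ≠ 0 := by
    have := hτ _ hω'; have := hv _ hω'; positivity
  have h₂ : (μ₀ + ε * μ) * v (ω₀ + ε * ω) ≠ 0 := by have := hv _ hω'; positivity
  refine ContinuousAt.continuousWithinAt ?_
  unfold rescaledIntegrand rescaledAmplitude rescaledShift
  fun_prop (disch := assumption)

end Rescaled

theorem stmt_6_general (φ₀ ψ₀ : ℝ → ℝ)
    (hφ₀_cont : Continuous φ₀) (hψ₀_cont : Continuous ψ₀)
    (hφ₀_range : ∀ x, φ₀ x ∈ Icc (0:ℝ) 1) (hψ₀_range : ∀ x, ψ₀ x ∈ Icc (0:ℝ) 1)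
    (η₁ τ v : ℝ → ℝ)
    (hη₁_cont : ContinuousOn η₁ (Ioi 0)) (hη₁_range : ∀ ω > 0, η₁ ω ∈ Icc (0:ℝ) 1)
    (hτ_cont : ContinuousOn τ (Ioi 0)) (hτ_pos : ∀ ω > 0, 0 < τ ω)
    (hv_cont : ContinuousOn v (Ioi 0)) (hv_pos : ∀ ω > 0, 0 < v ω)
    (μ₀ ω₀ : ℝ) (hμ₀ : μ₀ ∈ Ioo (0:ℝ) 1) (hω₀ : 0 < ω₀)
    (v' : ℝ) (hv : HasDerivAt v v' ω₀) :
    Tendsto (fun ε : ℝ =>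
      ∫ t in Icc (0:ℝ) 1, ∫ μ in Icc (0:ℝ) 1, ∫ ω in Icc (0:ℝ) 1,
        η₁ (ω₀ + ε * ω)
          * Real.exp (-(2 / (τ (ω₀ + ε * ω) * (μ₀ + ε * μ) * v (ω₀ + ε * ω))))
          * ψ₀ (t + (1 / ε) * (2 / (μ₀ * v ω₀)
              - 2 / ((μ₀ + ε * μ) * v (ω₀ + ε * ω))))
          * φ₀ t * φ₀ μ * φ₀ ω)
      (𝓝[>] 0)
      (𝓝 (η₁ ω₀ * Real.exp (-(2 / (τ ω₀ * μ₀ * v ω₀)))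
        * ∫ t in Icc (0:ℝ) 1, ∫ μ in Icc (0:ℝ) 1, ∫ ω in Icc (0:ℝ) 1,
            ψ₀ (t + 2 / (μ₀ * v ω₀) ^ 2 * (v ω₀ * μ + μ₀ * v' * ω))
              * φ₀ t * φ₀ μ * φ₀ ω)) := by
  have hτ₀ := hτ_pos ω₀ hω₀
  have hv₀ := hv_pos ω₀ hω₀
  set K : Set (ℝ × ℝ × ℝ) := Icc 0 1 ×ˢ Icc 0 1 ×ˢ Icc 0 1
  have hK : IsCompact K := isCompact_Icc.prod (isCompact_Icc.prod isCompact_Icc)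
  have hcont : ∀ ε ≥ 0, ContinuousOn (rescaledIntegrand φ₀ ψ₀ η₁ τ v μ₀ ω₀ ε) K :=
    fun ε hε => (continuousOn_rescaledIntegrand hφ₀_cont hψ₀_cont hη₁_cont hτ_cont hτ_pos
      hv_cont hv_pos hμ₀.1 hω₀ hε).mono (prod_mono (subset_univ _)
        (prod_mono Icc_subset_Ici_self Icc_subset_Ici_self))
  have hbound : ∀ ε ≥ 0, ∀ q ∈ K, ‖rescaledIntegrand φ₀ ψ₀ η₁ τ v μ₀ ω₀ ε q‖ ≤ 1 := by
    rintro ε hε q ⟨-, hμ, hω⟩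
    have := rescaledIntegrand_mem_Icc hφ₀_range hψ₀_range hη₁_range hτ_pos hv_pos hμ₀.1 hω₀ hε
      hμ.1 hω.1
    rw [Real.norm_of_nonneg this.1]
    exact this.2
  have hlim := tendsto_setIntegral_of_continuousOn_of_norm_le_const
    (μ := volume.prod (volume.prod volume)) (l := 𝓝[>] 0) hK 1
    (eventually_nhdsWithin_of_forall fun ε hε => hcont ε (le_of_lt hε))
    (eventually_nhdsWithin_of_forall fun ε hε => hbound ε (le_of_lt hε))
    fun q _ => (tendsto_rescaledIntegrand hψ₀_cont (hη₁_cont.continuousAt (Ioi_mem_nhds hω₀))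
      (hτ_cont.continuousAt (Ioi_mem_nhds hω₀)) hv hτ₀.ne' (mul_pos hμ₀.1 hv₀).ne' q).mono_left
        (nhdsGT_le_nhdsNE 0)
  rw [integral_const_mul, setIntegral_prod_prod] at hlim
  · refine hlim.congr' (eventually_nhdsWithin_of_forall fun ε hε => ?_)
    exact setIntegral_prod_prod _ ((hcont ε (le_of_lt hε)).integrableOn_compact hK)
  · exact (Continuous.continuousOn (by fun_prop)).integrableOn_compact hK

theorem stmt_6 (φ₀ ψ₀ : ℝ → ℝ)
    (hφ₀_cont : Continuous φ₀) (hψ₀_cont : Continuous ψ₀)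
    (hφ₀_range : ∀ x, φ₀ x ∈ Icc (0:ℝ) 1) (hψ₀_range : ∀ x, ψ₀ x ∈ Icc (0:ℝ) 1)
    (hφ₀_supp : Function.support φ₀ ⊆ Icc (0:ℝ) 1)
    (hψ₀_supp : Function.support ψ₀ ⊆ Icc (-1:ℝ) 1)
    (η₁ τ v : ℝ → ℝ)
    (hη₁_cont : ContinuousOn η₁ (Ioi 0)) (hη₁_range : ∀ ω > 0, η₁ ω ∈ Icc (0:ℝ) 1)
    (hτ_cont : ContinuousOn τ (Ioi 0)) (hτ_pos : ∀ ω > 0, 0 < τ ω)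
    (hv_cont : ContinuousOn v (Ioi 0)) (hv_pos : ∀ ω > 0, 0 < v ω)
    (μ₀ ω₀ : ℝ) (hμ₀ : μ₀ ∈ Ioo (0:ℝ) 1) (hω₀ : 0 < ω₀)
    (v' : ℝ) (hv : HasDerivAt v v' ω₀) :
    Tendsto (fun ε : ℝ =>
      ∫ t in Icc (0:ℝ) 1, ∫ μ in Icc (0:ℝ) 1, ∫ ω in Icc (0:ℝ) 1,
        η₁ (ω₀ + ε * ω)
          * Real.exp (-(2 / (τ (ω₀ + ε * ω) * (μ₀ + ε * μ) * v (ω₀ + ε * ω))))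
          * ψ₀ (t + (1 / ε) * (2 / (μ₀ * v ω₀)
              - 2 / ((μ₀ + ε * μ) * v (ω₀ + ε * ω))))
          * φ₀ t * φ₀ μ * φ₀ ω)
      (𝓝[>] 0)
      (𝓝 (η₁ ω₀ * Real.exp (-(2 / (τ ω₀ * μ₀ * v ω₀)))
        * ∫ t in Icc (0:ℝ) 1, ∫ μ in Icc (0:ℝ) 1, ∫ ω in Icc (0:ℝ) 1,
            ψ₀ (t + 2 / (μ₀ * v ω₀) ^ 2 * (v ω₀ * μ + μ₀ * v' * ω))
              * φ₀ t * φ₀ μ * φ₀ ω)) :=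
  stmt_6_general φ₀ ψ₀ hφ₀_cont hψ₀_cont hφ₀_range hψ₀_range η₁ τ v hη₁_cont hη₁_range hτ_cont
    hτ_pos hv_cont hv_pos μ₀ ω₀ hμ₀ hω₀ v' hv
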